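/- The assignment sending a representation (V, ρ) of G(X) = (ker ∂)* ⋊ (coker ∂) to the triple (V, P^ρ, Q^ρ), with P^ρ(m) = (1/|K|) Σ_{χ∈K*} χ(m) ρ(χ, I) for m ∈ K = ker ∂ and P^ρ(m) = 0 otherwise, and Q^ρ(g) = ρ(1, Ig), defines a well-defined object of M(X) which is transparent, and this extends to a fully faithful functor F : G(X)-Rep → M(X). -/

import Mathlib

/-- A crossed module: groups `X₁`, `X₂`, a right action of `X₁` on `X₂` by group
automorphisms (written `act m g` for `m^g`), and a boundary homomorphism
`δ : X₂ →* X₁` satisfying equivariance and the Peiffer identity. -/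
structure CrossedModule (X₁ X₂ : Type) [Group X₁] [Group X₂] where
  act : X₂ → X₁ → X₂
  act_one : ∀ m : X₂, act m 1 = m
  act_mul : ∀ (m : X₂) (g h : X₁), act m (g * h) = act (act m g) h
  act_hom : ∀ (m n : X₂) (g : X₁), act (m * n) g = act m g * act n g
  δ : X₂ →* X₁
  equivariance : ∀ (m : X₂) (g : X₁), δ (act m g) = g⁻¹ * δ m * g
  peiffer : ∀ m n : X₂, act m (δ n) = n⁻¹ * m * n

section Representations
open TensorProduct

variable {F : Type} [Field F] {X₁ X₂ : Type} [Group X₁] [Group X₂] [Fintype X₁] [Fintype X₂] [DecidableEq X₂]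

/-- A representation of the crossed module `X` on the `F`-vector space `V`:
an `X₂`-grading, encoded by the family of projections `P m` onto the graded
components, together with an `X₁`-action `Q` such that `P(m)Q(g) = Q(g)P(m^g)`.
These are the objects of the category `M(X)`. -/
structure XRep (F : Type) [Field F] {X₁ X₂ : Type} [Group X₁] [Group X₂] [Fintype X₂] [DecidableEq X₂]
    (X : CrossedModule X₁ X₂)
    (V : Type) [AddCommGroup V] [Module F V] where
  P : X₂ → (V →ₗ[F] V)
  Q : X₁ → (V →ₗ[F] V)
  P_orth : ∀ m n : X₂, (P m) ∘ₗ (P n) = if m = n then P m else 0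
  P_total : (∑ m : X₂, P m) = LinearMap.id
  Q_one : Q 1 = LinearMap.id
  Q_mul : ∀ g h : X₁, Q (g * h) = Q g ∘ₗ Q h
  PQ_compat : ∀ (m : X₂) (g : X₁), (P m) ∘ₗ (Q g) = (Q g) ∘ₗ (P (X.act m g))

variable {X : CrossedModule X₁ X₂}
variable {U V W U' V' W' : Type}
  [AddCommGroup U] [Module F U] [AddCommGroup V] [Module F V] [AddCommGroup W] [Module F W]
  [AddCommGroup U'] [Module F U'] [AddCommGroup V'] [Module F V'] [AddCommGroup W'] [Module F W']

/-- The grading of the tensor product: `(V ⊗ W)_m = ⊕_{nl = m} V_n ⊗ W_l`. -/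
noncomputable def tensorP (A : XRep F X V) (B : XRep F X W) (m : X₂) :
    (V ⊗[F] W) →ₗ[F] (V ⊗[F] W) :=
  ∑ n : X₂, TensorProduct.map (A.P n) (B.P (n⁻¹ * m))

/-- The diagonal `X₁`-action on the tensor product. -/
noncomputable def tensorQ (A : XRep F X V) (B : XRep F X W) (g : X₁) :
    (V ⊗[F] W) →ₗ[F] (V ⊗[F] W) :=
  TensorProduct.map (A.Q g) (B.Q g)

/-- The braiding `R_{V,W}(v ⊗ w) = ∑_{m ∈ X₂} Q_W(∂m) w ⊗ P_V(m) v`, written in terms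
of the grading data `PA` on `V` and the action data `QB` on `W`. -/
noncomputable def braidAux (X : CrossedModule X₁ X₂)
    (PA : X₂ → (V →ₗ[F] V)) (QB : X₁ → (W →ₗ[F] W)) :
    (V ⊗[F] W) →ₗ[F] (W ⊗[F] V) :=
  ∑ m : X₂, (TensorProduct.map (QB (X.δ m)) (PA m)) ∘ₗ
    (TensorProduct.comm F V W).toLinearMap

/-- The braiding `R_{V,W}` between two crossed-module representations. -/
noncomputable def braid (A : XRep F X V) (B : XRep F X W) :
    (V ⊗[F] W) →ₗ[F] (W ⊗[F] V) :=
  braidAux X A.P B.Q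

/-- Morphisms in `M(X)`: linear maps compatible with the grading and the action. -/
def IsXRepHom (A : XRep F X V) (B : XRep F X W) (f : V →ₗ[F] W) : Prop :=
  (∀ m : X₂, f ∘ₗ A.P m = B.P m ∘ₗ f) ∧ (∀ g : X₁, f ∘ₗ A.Q g = B.Q g ∘ₗ f)

end Representations

section GX

variable {X₁ X₂ : Type} [Group X₁] [Group X₂]

lemma CrossedModule.one_act (X : CrossedModule X₁ X₂) (g : X₁) : X.act 1 g = 1 := by
  have h := X.act_hom 1 1 g
  rw [mul_one] at h
  exact mul_left_cancel (a := X.act 1 g) (by rw [mul_one]; exact h.symm)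

/-- The action of `X₁` on `X₂` preserves `ker ∂`, giving an action on the kernel. -/
def CrossedModule.kerAct (X : CrossedModule X₁ X₂) (k : X.δ.ker) (g : X₁) : X.δ.ker :=
  ⟨X.act (k : X₂) g, by
    have hk : X.δ (k : X₂) = 1 := k.2
    simp [MonoidHom.mem_ker, X.equivariance, hk]⟩

lemma CrossedModule.kerAct_one (X : CrossedModule X₁ X₂) (g : X₁) :
    X.kerAct 1 g = 1 := by
  apply Subtype.ext
  show X.act ((1 : X.δ.ker) : X₂) g = ((1 : X.δ.ker) : X₂)
  simpa using X.one_act g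

lemma CrossedModule.kerAct_mul (X : CrossedModule X₁ X₂) (k k' : X.δ.ker) (g : X₁) :
    X.kerAct (k * k') g = X.kerAct k g * X.kerAct k' g := by
  apply Subtype.ext
  simpa [CrossedModule.kerAct] using X.act_hom (k : X₂) (k' : X₂) g

variable (F : Type) [Field F] (X : CrossedModule X₁ X₂) [X.δ.range.Normal]

/-- The character group `(ker ∂)* = Hom(ker ∂, F^×)` of the abelian group `ker ∂`. -/
abbrev KChar : Type := X.δ.ker →* Fˣ

/-- The cokernel `coker ∂ = X₁ / Im ∂`. -/
abbrev Coker : Type := X₁ ⧸ X.δ.range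

/-- The dual action `μ̂` of `coker ∂` on `(ker ∂)*`: `(χ^c)(k) = χ(k^{c⁻¹})`,
computed via a coset representative. -/
noncomputable def dualActQ (c : Coker X) (χ : KChar F X) : KChar F X where
  toFun k := χ (X.kerAct k (Quotient.out c)⁻¹)
  map_one' := by (try dsimp only); rw [X.kerAct_one, map_one]
  map_mul' k k' := by (try dsimp only); rw [X.kerAct_mul, map_mul]

variable {V : Type} [AddCommGroup V] [Module F V]

/-- `ρ` is a representation of the group `G(X) = (ker ∂)* ⋊_{μ̂} (coker ∂)` on `V`
(with the semidirect product multiplication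
`(χ, c) · (χ', c') = (χ^{c'} χ', c c')`). -/
def IsGRep (ρ : KChar F X × Coker X → (V →ₗ[F] V)) : Prop :=
  ρ (1, 1) = LinearMap.id ∧
  ∀ (χ χ' : KChar F X) (c c' : Coker X),
    ρ (dualActQ F X c' χ * χ', c * c') = ρ (χ, c) ∘ₗ ρ (χ', c')

variable [Fintype X₂] [DecidableEq X₂]
open Classical in

/-- The grading part of the functor `F : G(X)-Rep → M(X)`:
`P^ρ(m) = (1/|K|) ∑_{χ ∈ K*} χ(m) ρ(χ, I)` for `m ∈ K = ker ∂`, and `0` otherwise. -/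
noncomputable def FobP (ρ : KChar F X × Coker X → (V →ₗ[F] V)) (m : X₂) :
    V →ₗ[F] V :=
  if h : m ∈ X.δ.ker then
    (Nat.card X.δ.ker : F)⁻¹ • ∑ᶠ χ : KChar F X, ((χ ⟨m, h⟩ : Fˣ) : F) • ρ (χ, 1)
  else 0

/-- The action part of the functor `F : G(X)-Rep → M(X)`: `Q^ρ(g) = ρ(1, Ig)`. -/
def FobQ (ρ : KChar F X × Coker X → (V →ₗ[F] V)) (g : X₁) : V →ₗ[F] V :=
  ρ (1, QuotientGroup.mk g)

end GX

/-!
By the Peiffer identity `ker ∂` is central in `X₂`, hence a finite abelian group `K`, and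
`χ ↦ ρ(χ, 1)` is a representation of its dual. The operators `P^ρ(k)` are the Fourier transforms
of this representation: orthogonality of characters makes them orthogonal idempotents summing
to `1`, and `ρ(χ, 1) = ∑ₖ χ(k)⁻¹ P^ρ(k)` recovers the representation from them, so a linear map
intertwines the `ρ(χ, 1)` iff it intertwines the `P^ρ(k)`; this is full faithfulness. The
relation `ρ(χ, 1) ρ(1, c) = ρ(1, c) ρ(χ^c, 1)` of the semidirect product becomes
`P(m) Q(g) = Q(g) P(m^g)`. Transparency is immediate: `P^ρ` lives on `ker ∂`, where `∂` is
trivial, and `Q^ρ` is trivial on `Im ∂`, so both braidings are the flip of tensor factors.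
-/

section CharacterSums

variable {A F : Type*} [Field F]

theorem MonoidHom.sum_units_apply_eq_zero [Group A] [Fintype A] {χ : A →* Fˣ} (hχ : χ ≠ 1) :
    ∑ a, (χ a : F) = 0 :=
  sum_hom_units_eq_zero ((Units.coeHom F).comp χ) fun h =>
    hχ (MonoidHom.ext fun a => Units.ext (DFunLike.congr_fun h a))

theorem MonoidHom.sum_units_apply_eq_ite [Group A] [Fintype A] (χ : A →* Fˣ)
    [Decidable (χ = 1)] : ∑ a, (χ a : F) = if χ = 1 then (Nat.card A : F) else 0 := by
  split_ifs with h
  · simp [h]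
  · exact χ.sum_units_apply_eq_zero h

theorem sum_monoidHom_units_apply_eq_ite [CommGroup A] [Finite A]
    [HasEnoughRootsOfUnity F (Monoid.exponent A)] [Fintype (A →* Fˣ)] (a : A)
    [Decidable (a = 1)] :
    ∑ χ : A →* Fˣ, (χ a : F) = if a = 1 then (Nat.card A : F) else 0 := by
  split_ifs with ha
  · simp [ha, ← Nat.card_eq_fintype_card, CommGroup.card_monoidHom_of_hasEnoughRootsOfUnity]
  · refine MonoidHom.sum_units_apply_eq_zero (A := A →* Fˣ) (χ := MonoidHom.eval a) fun h => ?_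
    obtain ⟨χ, hχ⟩ := CommGroup.exists_apply_ne_one_of_hasEnoughRootsOfUnity A F ha
    exact hχ (DFunLike.congr_fun h χ)

end CharacterSums

section FourierProjection

variable {A F V V' : Type*} [Field F] [AddCommGroup V] [Module F V] [AddCommGroup V'] [Module F V']

noncomputable def fourierProj [Group A] (σ : (A →* Fˣ) →* Module.End F V) (a : A) :
    Module.End F V :=
  (Nat.card A : F)⁻¹ • ∑ᶠ χ : A →* Fˣ, (χ a : F) • σ χ

theorem fourierProj_eq_sum [Group A] [Fintype (A →* Fˣ)] (σ : (A →* Fˣ) →* Module.End F V)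
    (a : A) : fourierProj σ a = (Nat.card A : F)⁻¹ • ∑ χ : A →* Fˣ, (χ a : F) • σ χ := by
  rw [fourierProj, finsum_eq_sum_of_fintype]

variable [Group A] [Finite A] (σ : (A →* Fˣ) →* Module.End F V)

theorem mul_fourierProj (χ : A →* Fˣ) (a : A) :
    σ χ * fourierProj σ a = (χ a⁻¹ : F) • fourierProj σ a := by
  have := Fintype.ofFinite (A →* Fˣ)
  have hshift : ∑ ψ, (ψ a : F) • σ (χ * ψ) = ∑ ψ, (χ a⁻¹ : F) • (ψ a : F) • σ ψ :=
    Fintype.sum_equiv (Equiv.mulLeft χ) _ _ fun ψ => by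
      simp [smul_smul, (χ a).ne_zero]
  simp only [fourierProj_eq_sum, mul_smul_comm, Finset.mul_sum, ← map_mul, hshift,
    ← Finset.smul_sum]
  rw [smul_comm]

theorem fourierProj_mul_of_mul_comp (e : A ≃* A) {T : Module.End F V}
    (hT : ∀ χ, σ χ * T = T * σ (χ.comp e.toMonoidHom)) (a : A) :
    fourierProj σ (e a) * T = T * fourierProj σ a := by
  have := Fintype.ofFinite (A →* Fˣ)
  simp only [fourierProj_eq_sum, smul_mul_assoc, mul_smul_comm, Finset.sum_mul, Finset.mul_sum,
    hT]
  congr 1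
  exact Fintype.sum_equiv (e.symm.monoidHomCongrLeft (N := Fˣ)).toEquiv _ _ fun χ => by simp

variable [Fintype A] [NeZero (Nat.card A : F)]

theorem sum_fourierProj : ∑ a, fourierProj σ a = 1 := by
  classical
  have := Fintype.ofFinite (A →* Fˣ)
  simp only [fourierProj_eq_sum, ← Finset.smul_sum]
  rw [Finset.sum_comm]
  simp only [← Finset.sum_smul, MonoidHom.sum_units_apply_eq_ite, ite_smul, zero_smul,
    Finset.sum_ite_eq', Finset.mem_univ, if_true, smul_smul, map_one]
  rw [inv_mul_cancel₀ (NeZero.ne _), one_smul]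

theorem sum_smul_fourierProj (χ : A →* Fˣ) :
    ∑ a, (χ a⁻¹ : F) • fourierProj σ a = σ χ := by
  simp only [← mul_fourierProj, ← Finset.mul_sum, sum_fourierProj, mul_one]

theorem comp_fourierProj_iff (σ' : (A →* Fˣ) →* Module.End F V') (f : V →ₗ[F] V') :
    (∀ a, f ∘ₗ fourierProj σ a = fourierProj σ' a ∘ₗ f) ↔ ∀ χ, f ∘ₗ σ χ = σ' χ ∘ₗ f := by
  have := Fintype.ofFinite (A →* Fˣ)
  constructor
  · intro h χ
    have hv : ∀ a v, f (fourierProj σ a v) = fourierProj σ' a (f v) :=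
      fun a => LinearMap.congr_fun (h a)
    ext v
    rw [← sum_smul_fourierProj σ χ, ← sum_smul_fourierProj σ' χ]
    simp [map_sum, hv]
  · intro h a
    have hv : ∀ χ v, f (σ χ v) = σ' χ (f v) := fun χ => LinearMap.congr_fun (h χ)
    ext v
    simp [fourierProj_eq_sum, map_sum, hv]

end FourierProjection

theorem fourierProj_mul_fourierProj {A F V : Type*} [Field F] [AddCommGroup V] [Module F V]
    [CommGroup A] [Finite A] [DecidableEq A] [HasEnoughRootsOfUnity F (Monoid.exponent A)]
    [NeZero (Nat.card A : F)] (σ : (A →* Fˣ) →* Module.End F V) (a b : A) :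
    fourierProj σ a * fourierProj σ b = if a = b then fourierProj σ a else 0 := by
  have := Fintype.ofFinite (A →* Fˣ)
  calc fourierProj σ a * fourierProj σ b
      = (Nat.card A : F)⁻¹ • ∑ χ : A →* Fˣ, (χ (a * b⁻¹) : F) • fourierProj σ b := by
        simp only [fourierProj_eq_sum σ a, smul_mul_assoc, Finset.sum_mul, mul_fourierProj,
          smul_smul, ← Units.val_mul, ← map_mul]
    _ = if a = b then fourierProj σ a else 0 := by
        simp only [← Finset.sum_smul, sum_monoidHom_units_apply_eq_ite, mul_inv_eq_one, smul_smul]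
        split_ifs with h
        · rw [h, inv_mul_cancel₀ (NeZero.ne _), one_smul]
        · simp

namespace CrossedModule

variable {X₁ X₂ : Type} [Group X₁] [Group X₂] (X : CrossedModule X₁ X₂)

theorem commute_of_mem_ker {a : X₂} (ha : a ∈ X.δ.ker) (n : X₂) : Commute a n := by
  have h := X.peiffer n a
  rw [MonoidHom.mem_ker.mp ha, X.act_one] at h
  calc a * n = a * (a⁻¹ * n * a) := by rw [← h]
    _ = n * a := by group

instance : CommGroup X.δ.ker :=
  { (inferInstance : Group X.δ.ker) with
    mul_comm := fun a b => Subtype.ext (X.commute_of_mem_ker a.2 b) }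

theorem kerAct_delta (k : X.δ.ker) (n : X₂) : X.kerAct k (X.δ n) = k := by
  refine Subtype.ext ((X.peiffer k n).trans ?_)
  rw [(X.commute_of_mem_ker k.2 n⁻¹).symm.eq, inv_mul_cancel_right]

theorem act_mem_ker_iff {m : X₂} {g : X₁} : X.act m g ∈ X.δ.ker ↔ m ∈ X.δ.ker := by
  rw [MonoidHom.mem_ker, MonoidHom.mem_ker, X.equivariance, mul_assoc, inv_mul_eq_one, right_eq_mul]

theorem kerAct_one_right (k : X.δ.ker) : X.kerAct k 1 = k :=
  Subtype.ext (X.act_one k)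

theorem kerAct_kerAct (k : X.δ.ker) (g h : X₁) : X.kerAct (X.kerAct k g) h = X.kerAct k (g * h) :=
  Subtype.ext (X.act_mul k g h).symm

@[simps]
def kerActEquiv (g : X₁) : X.δ.ker ≃* X.δ.ker where
  toFun k := X.kerAct k g
  invFun k := X.kerAct k g⁻¹
  left_inv k := by simp only [kerAct_kerAct, mul_inv_cancel, kerAct_one_right]
  right_inv k := by simp only [kerAct_kerAct, inv_mul_cancel, kerAct_one_right]
  map_mul' k k' := X.kerAct_mul k k' g

end CrossedModule

section GRep

variable {F : Type} [Field F] {X₁ X₂ : Type} [Group X₁] [Group X₂] {X : CrossedModule X₁ X₂}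

theorem dualActQ_mk (g : X₁) (χ : KChar F X) :
    dualActQ F X (QuotientGroup.mk g) χ = χ.comp (X.kerActEquiv g⁻¹).toMonoidHom := by
  obtain ⟨⟨_, n, rfl⟩, hn⟩ := QuotientGroup.mk_out_eq_mul X.δ.range g
  ext k
  simp only [dualActQ, hn, mul_inv_rev, ← map_inv, ← X.kerAct_kerAct, X.kerAct_delta]
  rfl

theorem dualActQ_apply_one (c : Coker X) : dualActQ F X c 1 = 1 :=
  MonoidHom.ext fun _ => rfl

variable [X.δ.range.Normal]

theorem dualActQ_one (χ : KChar F X) : dualActQ F X 1 χ = χ := by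
  ext k
  simp [← QuotientGroup.mk_one, dualActQ_mk, CrossedModule.kerActEquiv, X.kerAct_one_right]

variable {V : Type} [AddCommGroup V] [Module F V] {ρ : KChar F X × Coker X → (V →ₗ[F] V)}

namespace IsGRep

variable (hρ : IsGRep F X ρ)
include hρ

def charRep : KChar F X →* Module.End F V where
  toFun χ := ρ (χ, 1)
  map_one' := hρ.1
  map_mul' χ ψ := by rw [Module.End.mul_eq_comp, ← hρ.2, dualActQ_one, mul_one]

-- `rw [one_mul]` does not see through the `MonoidHom.mul` instance occurring in `IsGRep`,
-- hence the instances of `one_mul` and `mul_one` with their types written out.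
theorem map_one_mul (c c' : Coker X) : ρ (1, c * c') = ρ (1, c) ∘ₗ ρ (1, c') := by
  rw [← hρ.2, dualActQ_apply_one, (mul_one (1 : KChar F X) : (1 : KChar F X) * 1 = 1)]

theorem map_eq_comp (χ : KChar F X) (c : Coker X) : ρ (χ, c) = ρ (1, c) ∘ₗ ρ (χ, 1) := by
  rw [← hρ.2, dualActQ_apply_one, (one_mul χ : (1 : KChar F X) * χ = χ), mul_one]

theorem map_comp_map_one (χ : KChar F X) (c : Coker X) :
    ρ (χ, 1) ∘ₗ ρ (1, c) = ρ (1, c) ∘ₗ ρ (dualActQ F X c χ, 1) := by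
  rw [← hρ.2, (mul_one (dualActQ F X c χ) : dualActQ F X c χ * 1 = _), one_mul, hρ.map_eq_comp]

theorem comp_iff {V' : Type} [AddCommGroup V'] [Module F V']
    {ρ' : KChar F X × Coker X → (V' →ₗ[F] V')} (hρ' : IsGRep F X ρ') (f : V →ₗ[F] V') :
    (∀ p, f ∘ₗ ρ p = ρ' p ∘ₗ f) ↔
      (∀ χ, f ∘ₗ ρ (χ, 1) = ρ' (χ, 1) ∘ₗ f) ∧ ∀ c, f ∘ₗ ρ (1, c) = ρ' (1, c) ∘ₗ f := by
  refine ⟨fun h => ⟨fun χ => h _, fun c => h _⟩, fun ⟨hχ, hc⟩ ⟨χ, c⟩ => ?_⟩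
  rw [hρ.map_eq_comp, hρ'.map_eq_comp, LinearMap.comp_assoc, ← hχ, ← LinearMap.comp_assoc, hc]
  rfl

end IsGRep

end GRep

theorem braidAux_eq_comm {F X₁ X₂ V W : Type} [Field F] [Group X₁] [Group X₂] [Fintype X₂]
    [AddCommGroup V] [Module F V] [AddCommGroup W] [Module F W] (X : CrossedModule X₁ X₂)
    {PA : X₂ → (V →ₗ[F] V)} {QB : X₁ → (W →ₗ[F] W)} (hP : ∑ m, PA m = LinearMap.id)
    (hQ : ∀ m, QB (X.δ m) = LinearMap.id ∨ PA m = 0) :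
    braidAux X PA QB = (TensorProduct.comm F V W).toLinearMap := by
  refine TensorProduct.ext' fun v w => ?_
  have hterm : ∀ m, QB (X.δ m) w ⊗ₜ[F] PA m v = w ⊗ₜ[F] PA m v := fun m => by
    rcases hQ m with h | h <;> simp [h]
  simp only [braidAux, LinearMap.coe_sum, LinearMap.coe_comp, LinearEquiv.coe_coe,
    Finset.sum_apply, Function.comp_apply, TensorProduct.comm_tmul, TensorProduct.map_tmul, hterm]
  rw [← TensorProduct.tmul_sum, ← LinearMap.sum_apply, hP, LinearMap.id_apply]

section Functor

variable {F : Type} [Field F] {X₁ X₂ : Type} [Group X₁] [Group X₂] {X : CrossedModule X₁ X₂}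
  [X.δ.range.Normal] {V : Type} [AddCommGroup V] [Module F V]
  {ρ : KChar F X × Coker X → (V →ₗ[F] V)}

theorem FobP_of_mem (hρ : IsGRep F X ρ) {m : X₂} (hm : m ∈ X.δ.ker) :
    FobP F X ρ m = fourierProj hρ.charRep ⟨m, hm⟩ :=
  dif_pos hm

theorem FobP_of_not_mem {m : X₂} (hm : m ∉ X.δ.ker) : FobP F X ρ m = 0 :=
  dif_neg hm

theorem FobQ_delta (hρ : IsGRep F X ρ) (n : X₂) : FobQ F X ρ (X.δ n) = LinearMap.id := by
  rw [FobQ, (QuotientGroup.eq_one_iff _).mpr (MonoidHom.mem_range.mpr ⟨n, rfl⟩)]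
  exact hρ.1

variable [Fintype X₂]

theorem braidAux_FobQ (hρ : IsGRep F X ρ) {W : Type} [AddCommGroup W] [Module F W]
    {PB : X₂ → (W →ₗ[F] W)} (hP : ∑ m, PB m = LinearMap.id) :
    braidAux X PB (FobQ F X ρ) = (TensorProduct.comm F W V).toLinearMap :=
  braidAux_eq_comm X hP fun m => .inl (FobQ_delta hρ m)

theorem FobP_comp_FobQ (hρ : IsGRep F X ρ) (m : X₂) (g : X₁) :
    FobP F X ρ m ∘ₗ FobQ F X ρ g = FobQ F X ρ g ∘ₗ FobP F X ρ (X.act m g) := by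
  classical
  by_cases hm : m ∈ X.δ.ker
  · have key := fourierProj_mul_of_mul_comp hρ.charRep (X.kerActEquiv g⁻¹)
      (fun χ => by rw [← dualActQ_mk]; exact hρ.map_comp_map_one χ _) (X.kerAct ⟨m, hm⟩ g)
    rw [CrossedModule.kerActEquiv_apply, X.kerAct_kerAct, mul_inv_cancel,
      X.kerAct_one_right] at key
    rw [FobP_of_mem hρ hm, FobP_of_mem hρ (X.act_mem_ker_iff.mpr hm)]
    exact key
  · rw [FobP_of_not_mem hm, FobP_of_not_mem (mt X.act_mem_ker_iff.mp hm),
      LinearMap.zero_comp, LinearMap.comp_zero]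

variable [NeZero (Nat.card X.δ.ker : F)]

theorem sum_FobP (hρ : IsGRep F X ρ) : ∑ m, FobP F X ρ m = LinearMap.id := by
  classical
  rw [← Fintype.sum_subtype_add_sum_subtype (· ∈ X.δ.ker),
    Fintype.sum_eq_zero (fun m : {m // m ∉ X.δ.ker} => FobP F X ρ m) fun m => FobP_of_not_mem m.2,
    add_zero]
  exact (Fintype.sum_congr _ _ fun k => FobP_of_mem hρ k.2).trans (sum_fourierProj hρ.charRep)

theorem braidAux_FobP (hρ : IsGRep F X ρ) {W : Type} [AddCommGroup W] [Module F W]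
    {QB : X₁ → (W →ₗ[F] W)} (hQ : QB 1 = LinearMap.id) :
    braidAux X (FobP F X ρ) QB = (TensorProduct.comm F V W).toLinearMap := by
  classical
  refine braidAux_eq_comm X (sum_FobP hρ) fun m => ?_
  by_cases hm : m ∈ X.δ.ker
  · exact .inl (MonoidHom.mem_ker.mp hm ▸ hQ)
  · exact .inr (FobP_of_not_mem hm)

theorem comp_FobP_iff {V' : Type} [AddCommGroup V'] [Module F V']
    {ρ' : KChar F X × Coker X → (V' →ₗ[F] V')} (hρ : IsGRep F X ρ) (hρ' : IsGRep F X ρ')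
    (f : V →ₗ[F] V') :
    (∀ m, f ∘ₗ FobP F X ρ m = FobP F X ρ' m ∘ₗ f) ↔ ∀ χ, f ∘ₗ ρ (χ, 1) = ρ' (χ, 1) ∘ₗ f := by
  classical
  refine Iff.trans ?_ (comp_fourierProj_iff hρ.charRep hρ'.charRep f)
  refine ⟨fun h k => ?_, fun h m => ?_⟩
  · rw [← FobP_of_mem hρ k.2, ← FobP_of_mem hρ' k.2]
    exact h k
  · by_cases hm : m ∈ X.δ.ker
    · rw [FobP_of_mem hρ hm, FobP_of_mem hρ' hm]
      exact h _
    · rw [FobP_of_not_mem hm, FobP_of_not_mem hm, LinearMap.comp_zero, LinearMap.zero_comp]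

theorem FobP_comp_FobP [DecidableEq X₂] [HasEnoughRootsOfUnity F (Monoid.exponent X.δ.ker)]
    (hρ : IsGRep F X ρ) (m n : X₂) :
    FobP F X ρ m ∘ₗ FobP F X ρ n = if m = n then FobP F X ρ m else 0 := by
  classical
  by_cases hm : m ∈ X.δ.ker
  · by_cases hn : n ∈ X.δ.ker
    · rw [FobP_of_mem hρ hm, FobP_of_mem hρ hn, ← Module.End.mul_eq_comp,
        fourierProj_mul_fourierProj]
      simp only [Subtype.mk.injEq]
    · rw [FobP_of_not_mem hn, LinearMap.comp_zero, if_neg (ne_of_mem_of_not_mem hm hn)]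
  · rw [FobP_of_not_mem hm, LinearMap.zero_comp, ite_self]

end Functor

theorem functor_F_well_defined_general {F : Type} [Field F] [IsAlgClosed F] [CharZero F]
    {X₁ X₂ : Type} [Group X₁] [Group X₂] [Fintype X₂] [DecidableEq X₂]
    (X : CrossedModule X₁ X₂) [X.δ.range.Normal]
    {V : Type} [AddCommGroup V] [Module F V]
    (ρ : KChar F X × Coker X → (V →ₗ[F] V)) (hρ : IsGRep F X ρ) :
    -- `(V, P^ρ, Q^ρ)` is an object of `M(X)`
    (∀ m n : X₂, FobP F X ρ m ∘ₗ FobP F X ρ n = if m = n then FobP F X ρ m else 0) ∧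
    ((∑ m : X₂, FobP F X ρ m) = LinearMap.id) ∧
    (FobQ F X ρ 1 = LinearMap.id) ∧
    (∀ g h : X₁, FobQ F X ρ (g * h) = FobQ F X ρ g ∘ₗ FobQ F X ρ h) ∧
    (∀ (m : X₂) (g : X₁),
      FobP F X ρ m ∘ₗ FobQ F X ρ g = FobQ F X ρ g ∘ₗ FobP F X ρ (X.act m g)) ∧
    -- it is transparent
    (∀ (W : Type) (_ : AddCommGroup W) (_ : Module F W) (B : XRep F X W),
      braidAux X B.P (FobQ F X ρ) ∘ₗ braidAux X (FobP F X ρ) B.Q = LinearMap.id ∧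
      braidAux X (FobP F X ρ) B.Q ∘ₗ braidAux X B.P (FobQ F X ρ) = LinearMap.id) ∧
    -- the functor `F` is fully faithful
    (∀ (V' : Type) (_ : AddCommGroup V') (_ : Module F V') (_ : FiniteDimensional F V')
      (ρ' : KChar F X × Coker X → (V' →ₗ[F] V')) (_ : IsGRep F X ρ')
      (f : V →ₗ[F] V'),
      (∀ p : KChar F X × Coker X, f ∘ₗ ρ p = ρ' p ∘ₗ f) ↔
        ((∀ m : X₂, f ∘ₗ FobP F X ρ m = FobP F X ρ' m ∘ₗ f) ∧
         (∀ g : X₁, f ∘ₗ FobQ F X ρ g = FobQ F X ρ' g ∘ₗ f))) := by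
  have : NeZero (Monoid.exponent X.δ.ker) := ⟨Monoid.exponent_ne_zero_of_finite⟩
  refine ⟨FobP_comp_FobP hρ, sum_FobP hρ, hρ.1, fun g h => hρ.map_one_mul (g : Coker X) h,
    FobP_comp_FobQ hρ, fun W _ _ B => ?_, fun V' _ _ _ ρ' hρ' f => ?_⟩
  · rw [braidAux_FobP hρ B.Q_one, braidAux_FobQ hρ B.P_total]
    exact ⟨TensorProduct.comm_comp_comm _ _ _, TensorProduct.comm_comp_comm _ _ _⟩
  · rw [hρ.comp_iff hρ' f, comp_FobP_iff hρ hρ' f, QuotientGroup.mk_surjective.forall]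
    rfl

/-- Sending a `G(X)`-representation `(V, ρ)` (where `G(X) = (ker ∂)* ⋊ (coker ∂)`)
to `(V, P^ρ, Q^ρ)` with `P^ρ(m) = (1/|K|) ∑_{χ ∈ K*} χ(m) ρ(χ, I)` for `m ∈ K`
(zero otherwise) and `Q^ρ(g) = ρ(1, Ig)` gives a well-defined object of `M(X)`
which is transparent, and this assignment is a fully faithful functor
`F : G(X)-Rep → M(X)`. -/
theorem functor_F_well_defined {F : Type} [Field F] [IsAlgClosed F] [CharZero F]
    {X₁ X₂ : Type} [Group X₁] [Group X₂] [Fintype X₁] [Fintype X₂] [DecidableEq X₂]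
    (X : CrossedModule X₁ X₂) [X.δ.range.Normal]
    {V : Type} [AddCommGroup V] [Module F V] [FiniteDimensional F V]
    (ρ : KChar F X × Coker X → (V →ₗ[F] V)) (hρ : IsGRep F X ρ) :
    -- `(V, P^ρ, Q^ρ)` is an object of `M(X)`
    (∀ m n : X₂, FobP F X ρ m ∘ₗ FobP F X ρ n = if m = n then FobP F X ρ m else 0) ∧
    ((∑ m : X₂, FobP F X ρ m) = LinearMap.id) ∧
    (FobQ F X ρ 1 = LinearMap.id) ∧
    (∀ g h : X₁, FobQ F X ρ (g * h) = FobQ F X ρ g ∘ₗ FobQ F X ρ h) ∧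
    (∀ (m : X₂) (g : X₁),
      FobP F X ρ m ∘ₗ FobQ F X ρ g = FobQ F X ρ g ∘ₗ FobP F X ρ (X.act m g)) ∧
    -- it is transparent
    (∀ (W : Type) (_ : AddCommGroup W) (_ : Module F W) (B : XRep F X W),
      braidAux X B.P (FobQ F X ρ) ∘ₗ braidAux X (FobP F X ρ) B.Q = LinearMap.id ∧
      braidAux X (FobP F X ρ) B.Q ∘ₗ braidAux X B.P (FobQ F X ρ) = LinearMap.id) ∧
    -- the functor `F` is fully faithful
    (∀ (V' : Type) (_ : AddCommGroup V') (_ : Module F V') (_ : FiniteDimensional F V')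
      (ρ' : KChar F X × Coker X → (V' →ₗ[F] V')) (_ : IsGRep F X ρ')
      (f : V →ₗ[F] V'),
      (∀ p : KChar F X × Coker X, f ∘ₗ ρ p = ρ' p ∘ₗ f) ↔
        ((∀ m : X₂, f ∘ₗ FobP F X ρ m = FobP F X ρ' m ∘ₗ f) ∧
         (∀ g : X₁, f ∘ₗ FobQ F X ρ g = FobQ F X ρ' g ∘ₗ f))) :=
  functor_F_well_defined_general X ρ hρ
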